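/- arXiv:2306.03335 — 3 statements merged into one kernel-verified Lean document; each statement's English description precedes it below -/
import Mathlib

section
/- Let F(t) = (1/τ)·[1 + 2σ² - 2(1+σ²)/(1 + exp(-2/τ + 2(1+σ²)t/τ))] with τ > 0, σ² > 0. Then F(1/(1+σ²)) = σ²/τ > 0, and the unique zero of F is t* = (1/(1+σ²))·(1 - (τ/2)·log(1+2σ²)). -/
/-- With `F(t) = (1/τ)[1 + 2σ² - 2(1+σ²)/(1 + exp(-2/τ + 2(1+σ²)t/τ))]`, `τ > 0`, `σ² > 0`
(`s` playing the role of `σ²`): `F(1/(1+σ²)) = σ²/τ > 0`, and the unique zero of `F` is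
`t* = (1/(1+σ²))(1 - (τ/2)log(1+2σ²))`. -/
theorem stmt3 (τ s : ℝ) (hτ : 0 < τ) (hs : 0 < s) :
    (1 / τ) * (1 + 2 * s - 2 * (1 + s) /
        (1 + Real.exp (-2 / τ + 2 * (1 + s) * (1 / (1 + s)) / τ))) = s / τ ∧
    0 < s / τ ∧
    ∀ t : ℝ,
      (1 / τ) * (1 + 2 * s - 2 * (1 + s) / (1 + Real.exp (-2 / τ + 2 * (1 + s) * t / τ))) = 0 ↔
        t = (1 / (1 + s)) * (1 - (τ / 2) * Real.log (1 + 2 * s)) := by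
  have hτ0 : τ ≠ 0 := ne_of_gt hτ
  have hs1 : (1 : ℝ) + s ≠ 0 := by positivity
  have h2s : (0 : ℝ) < 1 + 2 * s := by linarith
  refine ⟨?_, by positivity, ?_⟩
  · have he : -2 / τ + 2 * (1 + s) * (1 / (1 + s)) / τ = 0 := by
      field_simp
      ring
    rw [he, Real.exp_zero]
    field_simp
    ring
  · intro t
    constructor
    · intro h
      have hD : (0 : ℝ) < 1 + Real.exp (-2 / τ + 2 * (1 + s) * t / τ) := by
        positivity
      have h1 : 1 + 2 * s - 2 * (1 + s) /
          (1 + Real.exp (-2 / τ + 2 * (1 + s) * t / τ)) = 0 := by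
        have := mul_eq_zero.mp h
        rcases this with h' | h'
        · exact absurd h' (by simp [hτ0])
        · exact h'
      set x := Real.exp (-2 / τ + 2 * (1 + s) * t / τ) with hxdef
      have hD' : (1 : ℝ) + x ≠ 0 := ne_of_gt hD
      have h2 : x = 1 / (1 + 2 * s) := by
        have h1' : (1 + 2 * s) * (1 + x) = 2 * (1 + s) := by
          field_simp at h1
          linarith
        field_simp
        nlinarith
      have h3 : -2 / τ + 2 * (1 + s) * t / τ = Real.log (1 / (1 + 2 * s)) := by
        rw [← h2, hxdef, Real.log_exp]
      rw [Real.log_div one_ne_zero (ne_of_gt h2s), Real.log_one] at h3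
      field_simp at h3 ⊢
      nlinarith [h3]
    · intro ht
      subst ht
      have he : -2 / τ + 2 * (1 + s) *
          ((1 / (1 + s)) * (1 - (τ / 2) * Real.log (1 + 2 * s))) / τ
          = - Real.log (1 + 2 * s) := by
        field_simp
        ring
      rw [he, Real.exp_neg, Real.exp_log h2s]
      have : 1 + (1 + 2 * s)⁻¹ = (2 + 2 * s) / (1 + 2 * s) := by
        field_simp; ring
      rw [this]
      field_simp
      ring
end

section
/- Let τ > 0, σ² > 0, ρ > 0. The condition F(1/(1+σ²+ρ)) > 0, where F(t) = (1/τ)·[1 + 2σ² - 2(1+σ²)/(1 + exp(-2/τ + 2(1+σ²)t/τ))], is equivalent to τ > 2ρ / [(1+σ²+ρ)·log(1+2σ²)]. -/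
/-! Evaluated at `t = 1/(1+σ²+ρ)`, the exponent of `F` is `-x` with `x = 2ρ/((1+σ²+ρ)τ)`.
Writing `a = 1 + 2σ²`, so that `2(1+σ²) = a + 1`, positivity of `F` becomes `1 < a·e^{-x}`,
i.e. `x < log a`, which rearranges to the bound on `τ`. -/

open Real

lemma sub_div_one_add_pos_iff {a E : ℝ} (hE : -1 < E) :
    0 < a - (a + 1) / (1 + E) ↔ 1 < a * E := by
  rw [sub_pos, div_lt_iff₀ (by linarith)]
  constructor <;> intro h <;> linarith

lemma one_lt_mul_exp_neg_iff {a : ℝ} (ha : 0 < a) (x : ℝ) :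
    1 < a * exp (-x) ↔ x < log a := by
  rw [exp_neg, ← div_eq_mul_inv, one_lt_div (exp_pos x), lt_log_iff_exp_lt ha]

lemma div_mul_lt_iff_div_mul_lt {p b τ L : ℝ} (hb : 0 < b) (hτ : 0 < τ) (hL : 0 < L) :
    p / (b * τ) < L ↔ p / (b * L) < τ := by
  rw [div_lt_iff₀ (mul_pos hb hτ), div_lt_iff₀ (mul_pos hb hL)]
  constructor <;> intro h <;> linarith

lemma exponent_at_inv_eq {τ s ρ : ℝ} (h : 1 + s + ρ ≠ 0) :
    -2 / τ + 2 * (1 + s) * (1 / (1 + s + ρ)) / τ = -(2 * ρ / ((1 + s + ρ) * τ)) := by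
  rw [← add_div, ← div_div, ← neg_div]
  congr 1
  field_simp
  ring

/-- With `F(t) = (1/τ)[1 + 2σ² - 2(1+σ²)/(1 + exp(-2/τ + 2(1+σ²)t/τ))]`, `τ > 0`,
`σ² > 0` (written `s`), `ρ > 0`:  `F(1/(1+σ²+ρ)) > 0` is equivalent to
`τ > 2ρ/((1+σ²+ρ)·log(1+2σ²))`. -/
theorem stmt4 (τ s ρ : ℝ) (hτ : 0 < τ) (hs : 0 < s) (hρ : 0 < ρ) :
    0 < (1 / τ) * (1 + 2 * s - 2 * (1 + s) /
        (1 + Real.exp (-2 / τ + 2 * (1 + s) * (1 / (1 + s + ρ)) / τ))) ↔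
      2 * ρ / ((1 + s + ρ) * Real.log (1 + 2 * s)) < τ := by
  have hb : 0 < 1 + s + ρ := by linarith
  have ha : 0 < 1 + 2 * s := by linarith
  rw [exponent_at_inv_eq hb.ne', mul_pos_iff_of_pos_left (one_div_pos.2 hτ),
    show 2 * (1 + s) = (1 + 2 * s) + 1 by ring,
    sub_div_one_add_pos_iff (by linarith [exp_pos (-(2 * ρ / ((1 + s + ρ) * τ)))]),
    one_lt_mul_exp_neg_iff ha]
  exact div_mul_lt_iff_div_mul_lt hb hτ (log_pos (by linarith))
end

section
/- Let f, f_ℓ, f_u : X → ℝ satisfy f_ℓ(x) ≤ f(x) ≤ f_u(x) for all x ∈ X. Suppose f_ℓ(x) = h(φ(x)) where φ : X → Y ⊆ ℝ is surjective and h : Y → ℝ is twice continuously differentiable with h'' ≥ m > 0 on Y. Let x_ℓ* ∈ X satisfy φ(x_ℓ*) = y_ℓ* where y_ℓ* minimizes h over Y, and let x* minimize f over X. Then |y_ℓ* − φ(x*)|² ≤ 2·(f_u(x_ℓ*) − f_ℓ(x_ℓ*)) / m. -/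
/-- Sandwich lemma: if `f_ℓ ≤ f ≤ f_u` on `X`, `f_ℓ = h ∘ φ` with `φ : X → Y ⊆ ℝ`
surjective and `h` twice differentiable with `h'' ≥ m > 0` on the interval `Y`,
`x_ℓ*` realizes the minimizer `y_ℓ*` of `h` and `x*` minimizes `f`, then
`|y_ℓ* - φ(x*)|² ≤ 2(f_u(x_ℓ*) - f_ℓ(x_ℓ*))/m`. -/
theorem stmt13 (q : ℕ) (X : Set (Fin q → ℝ)) (Y : Set ℝ)
    (f fl fu : (Fin q → ℝ) → ℝ) (φ : (Fin q → ℝ) → ℝ)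
    (h h' h'' : ℝ → ℝ) (m : ℝ) (hm : 0 < m)
    (hY : Convex ℝ Y)
    (hsand : ∀ x ∈ X, fl x ≤ f x ∧ f x ≤ fu x)
    (hcomp : ∀ x ∈ X, fl x = h (φ x))
    (hsurj : φ '' X = Y)
    (hd1 : ∀ y ∈ Y, HasDerivWithinAt h (h' y) Y y)
    (hd2 : ∀ y ∈ Y, HasDerivWithinAt h' (h'' y) Y y)
    (hlb : ∀ y ∈ Y, m ≤ h'' y)
    (xl xs : Fin q → ℝ) (yl : ℝ)
    (hxl : xl ∈ X) (hyl : φ xl = yl)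
    (hylmin : ∀ y ∈ Y, h yl ≤ h y)
    (hxs : xs ∈ X) (hxsmin : ∀ x ∈ X, f xs ≤ f x) :
    |yl - φ xs| ^ 2 ≤ 2 * (fu xl - fl xl) / m := by
  -- the auxiliary function g = h - (m/2)(· - yl)² is convex on Y
  set g : ℝ → ℝ := fun y => h y - m / 2 * (y - yl) ^ 2 with hg
  have hgd : ∀ y ∈ Y, HasDerivWithinAt g (h' y - m * (y - yl)) Y y := by
    intro y hy
    have hq : HasDerivWithinAt (fun y => m / 2 * (y - yl) ^ 2) (m * (y - yl)) Y y := by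
      have : HasDerivWithinAt (fun y : ℝ => (y - yl) ^ 2) (2 * (y - yl)) Y y := by
        simpa using (((hasDerivWithinAt_id y Y).sub_const yl).fun_pow 2)
      have := this.const_mul (m / 2)
      rw [show m * (y - yl) = m / 2 * (2 * (y - yl)) by ring]
      exact this
    exact (hd1 y hy).sub hq
  have hgconv : ConvexOn ℝ Y g := by
    apply convexOn_of_hasDerivWithinAt2_nonneg hY
      (f' := fun y => h' y - m * (y - yl)) (f'' := fun y => h'' y - m)
    · exact fun y hy => (hgd y hy).continuousWithinAt
    · exact fun y hy => ((hgd y (interior_subset hy)).mono interior_subset)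
    · intro y hy
      have : HasDerivWithinAt (fun y => h' y - m * (y - yl)) (h'' y - m) Y y := by
        have hq : HasDerivWithinAt (fun y : ℝ => m * (y - yl)) m Y y := by
          simpa using (((hasDerivWithinAt_id y Y).sub_const yl).const_mul m)
        exact (hd2 y (interior_subset hy)).sub hq
      exact this.mono interior_subset
    · exact fun y hy => sub_nonneg.2 (hlb y (interior_subset hy))
  -- strong convexity quadratic growth at the minimizer
  have key : ∀ y ∈ Y, h yl + m / 2 * (y - yl) ^ 2 ≤ h y := by
    intro y hy
    have hylY : yl ∈ Y := by
      rw [← hyl, ← hsurj]; exact Set.mem_image_of_mem φ hxl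
    have step : ∀ t ∈ Set.Ioo (0:ℝ) 1, h yl + (1 - t) * (m / 2 * (y - yl) ^ 2) ≤ h y := by
      intro t ht
      obtain ⟨ht0, ht1⟩ := ht
      have hz : (1 - t) * yl + t * y ∈ Y := by
        have := hY hylY hy (by linarith : (0:ℝ) ≤ 1 - t) ht0.le (by ring)
        simpa [smul_eq_mul] using this
      have hconv := hgconv.2 hylY hy (by linarith : (0:ℝ) ≤ 1 - t) ht0.le
        (by ring : (1 - t) + t = 1)
      have hmin := hylmin _ hz
      have hzeq : (1 - t) * yl + t * y - yl = t * (y - yl) := by ring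
      simp only [hg, smul_eq_mul] at hconv
      rw [hzeq] at hconv
      -- hconv : h z - m/2 * (t*(y-yl))^2 ≤ (1-t)*(h yl - 0) + t*(h y - m/2*(y-yl)^2)
      have h1 : h yl - m / 2 * (t * (y - yl)) ^ 2 ≤
          (1 - t) * (h yl - m / 2 * (yl - yl) ^ 2) + t * (h y - m / 2 * (y - yl) ^ 2) :=
        le_trans (by linarith [hmin]) hconv
      have h2 : t * (h yl + (1 - t) * (m / 2 * (y - yl) ^ 2)) ≤ t * h y := by
        nlinarith [sq_nonneg (y - yl)]
      exact le_of_mul_le_mul_left (by linarith [h2]) ht0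
    -- take the limit t → 0⁺
    have htend : Filter.Tendsto (fun t : ℝ => h yl + (1 - t) * (m / 2 * (y - yl) ^ 2))
        (nhdsWithin 0 (Set.Ioo (0:ℝ) 1)) (nhds (h yl + m / 2 * (y - yl) ^ 2)) := by
      have : Continuous (fun t : ℝ => h yl + (1 - t) * (m / 2 * (y - yl) ^ 2)) := by
        continuity
      have h2 := (this.tendsto 0).mono_left
        (nhdsWithin_le_nhds (s := Set.Ioo (0:ℝ) 1))
      simpa using h2
    have hne : (nhdsWithin (0:ℝ) (Set.Ioo (0:ℝ) 1)).NeBot := by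
      apply IsGLB.nhdsWithin_neBot
      · exact isGLB_Ioo one_pos
      · exact Set.nonempty_Ioo.2 one_pos
    exact le_of_tendsto htend (Filter.eventually_of_mem self_mem_nhdsWithin
      fun t ht => step t ht)
  -- chain of inequalities
  have hysY : φ xs ∈ Y := by rw [← hsurj]; exact Set.mem_image_of_mem φ hxs
  have hkey := key (φ xs) hysY
  have e1 : h yl = fl xl := by rw [hcomp xl hxl, hyl]
  have e2 : h (φ xs) = fl xs := (hcomp xs hxs).symm
  have i1 : fl xs ≤ f xs := (hsand xs hxs).1
  have i2 : f xs ≤ f xl := hxsmin xl hxl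
  have i3 : f xl ≤ fu xl := (hsand xl hxl).2
  have habs : |yl - φ xs| ^ 2 = (φ xs - yl) ^ 2 := by
    rw [sq_abs]; ring
  rw [habs, le_div_iff₀ hm]
  nlinarith
end
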